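/- arXiv:2410.18942 — 6 statements merged into one kernel-verified Lean document; each statement's English description precedes it below -/
import Mathlib

section
/- Let f_R : R → R' be a radicial homomorphism of commutative rings and let C be a commutative R'-algebra (viewed as an R-algebra via f_R). Then the kernel of the canonical ring homomorphism p_C : C ⊗_R C → C ⊗_{R'} C is a nil ideal of C ⊗_R C. -/
open scoped TensorProduct

/-- A ring homomorphism `h : S → T` (here the structure map of the `S`-algebra `T`) is radicial
if the kernel of the canonical multiplication map `T ⊗[S] T → T`, `x ⊗ y ↦ x * y`,
is a nil ideal. -/
def IsRadicial (S T : Type*) [CommRing S] [CommRing T] [Algebra S T] : Prop :=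
  ∀ x ∈ RingHom.ker (Algebra.TensorProduct.lmul' (S := T) S).toRingHom, IsNilpotent x

/-- If `f_R : R → R'` is a radicial homomorphism of commutative rings and `C` is a
commutative `R'`-algebra (an `R`-algebra via `f_R`), then the kernel of the canonical ring
homomorphism `p_C : C ⊗[R] C → C ⊗[R'] C` is a nil ideal of `C ⊗[R] C`. -/
theorem ker_canonicalMap_nil_of_isRadicial
    (R R' C : Type*) [CommRing R] [CommRing R'] [CommRing C]
    [Algebra R R'] [Algebra R' C] [Algebra R C] [IsScalarTower R R' C]
    (hrad : IsRadicial R R')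
    (pC : C ⊗[R] C →+* C ⊗[R'] C)
    (hpC : ∀ x y : C, pC (x ⊗ₜ[R] y) = x ⊗ₜ[R'] y) :
    ∀ x ∈ RingHom.ker pC, IsNilpotent x := by
  intro x hx
  -- key nilpotency fact
  have key : ∀ r' : R', IsNilpotent
      ((algebraMap R' C r') ⊗ₜ[R] (1 : C) - (1 : C) ⊗ₜ[R] (algebraMap R' C r')) := by
    intro r'
    have h1 : (r' ⊗ₜ[R] (1 : R') - (1 : R') ⊗ₜ[R] r') ∈
        RingHom.ker (Algebra.TensorProduct.lmul' (S := R') R).toRingHom := by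
      simp [RingHom.mem_ker]
    have h2 := hrad _ h1
    have h3 := h2.map
      (Algebra.TensorProduct.map (IsScalarTower.toAlgHom R R' C) (IsScalarTower.toAlgHom R R' C))
    simpa using h3
  let q : C ⊗[R] C →+* (C ⊗[R] C) ⧸ nilradical (C ⊗[R] C) :=
    Ideal.Quotient.mk (nilradical (C ⊗[R] C))
  let f₁ : C →ₐ[R'] (C ⊗[R] C) ⧸ nilradical (C ⊗[R] C) :=
    (Ideal.Quotient.mkₐ R' (nilradical (C ⊗[R] C))).comp
      (Algebra.TensorProduct.includeLeft (R := R) (S := R') (A := C) (B := C))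
  let f₂ : C →ₐ[R'] (C ⊗[R] C) ⧸ nilradical (C ⊗[R] C) :=
    { toRingHom := q.comp (Algebra.TensorProduct.includeRight (R := R) (A := C) (B := C)).toRingHom
      commutes' := by
        intro r'
        show q ((1 : C) ⊗ₜ[R] (algebraMap R' C r')) = algebraMap R' _ r'
        have h : algebraMap R' ((C ⊗[R] C) ⧸ nilradical (C ⊗[R] C)) r' =
            q ((algebraMap R' C r') ⊗ₜ[R] (1 : C)) := rfl
        rw [h]
        refine Ideal.Quotient.eq.mpr ?_
        refine mem_nilradical.mpr ?_
        have := (key r').neg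
        simpa [neg_sub] using this }
  let g := Algebra.TensorProduct.lift f₁ f₂ (fun a b => Commute.all _ _)
  have hg : ∀ z : C ⊗[R] C, g (pC z) = q z := by
    intro z
    induction z using TensorProduct.induction_on with
    | zero => simp
    | tmul a b =>
        rw [hpC]
        show g (a ⊗ₜ[R'] b) = q (a ⊗ₜ[R] b)
        rw [Algebra.TensorProduct.lift_tmul]
        show q (a ⊗ₜ[R] 1) * q (1 ⊗ₜ[R] b) = q (a ⊗ₜ[R] b)
        rw [← map_mul]
        congr 1
        simp [Algebra.TensorProduct.tmul_mul_tmul]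
    | add u v hu hv => simp [map_add, hu, hv]
  have hq : q x = 0 := by
    have := hg x
    rw [RingHom.mem_ker.mp hx, map_zero] at this
    exact this.symm
  exact mem_nilradical.mp (Ideal.Quotient.eq_zero_iff_mem.mp hq)
end

section
/- Consider a commutative diagram of commutative ring homomorphisms with rows R → A → B and R' → A' → B' and vertical homomorphisms f_R : R → R', f_A : A → A', f : B → B'. If f_A is radicial and f is surjective, then the diagram is a Maranesi diagram, i.e. √(ker φ') = √(ker φ · (B' ⊗_{R'} B')). -/
/-
Both kernels are generated by the differences `a ⊗ 1 - 1 ⊗ a` of the middle ring, so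
`f̄(ker φ)` already contains the generators `f_A a ⊗ 1 - 1 ⊗ f_A a` of `ker φ'` coming from `A`.
For an arbitrary `a' ∈ A'`, the two maps `A' → (B' ⊗[R'] B') ⧸ f̄(ker φ)` through the left and
right factor agree on `A`, hence combine to a map out of `A' ⊗[A] A'`; it sends the nilpotent
element `a' ⊗ 1 - 1 ⊗ a'` of the kernel of multiplication to the class of the generator of
`a'`, which is therefore nilpotent.
-/

open scoped TensorProduct

theorem IsRadicial.isNilpotent_sub {A A' C : Type*} [CommRing A] [CommRing A'] [CommRing C]
    [Algebra A A'] (hrad : IsRadicial A A') (f g : A' →+* C)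
    (hfg : f.comp (algebraMap A A') = g.comp (algebraMap A A')) (a' : A') :
    IsNilpotent (f a' - g a') := by
  let : Algebra A C := (f.comp (algebraMap A A')).toAlgebra
  let α : A' →ₐ[A] C := { f with commutes' := fun _ => rfl }
  let β : A' →ₐ[A] C := { g with commutes' := fun a => (RingHom.congr_fun hfg a).symm }
  have hdiff : a' ⊗ₜ[A] (1 : A') - 1 ⊗ₜ[A] a' ∈
      RingHom.ker (Algebra.TensorProduct.lmul' (S := A') A).toRingHom := by
    simp [RingHom.mem_ker]
  have himage : Algebra.TensorProduct.productMap α β (a' ⊗ₜ[A] 1 - 1 ⊗ₜ[A] a') = f a' - g a' := by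
    simp [α, β]
  exact himage ▸ (hrad _ hdiff).map _

section BalancingIdeal

variable (R A B : Type*) [CommRing R] [CommRing A] [CommRing B] [Algebra A B] [Algebra R B]

def tensorBalancingIdeal : Ideal (B ⊗[R] B) :=
  Ideal.span (Set.range fun a : A => algebraMap A B a ⊗ₜ[R] (1 : B) - 1 ⊗ₜ[R] algebraMap A B a)

variable {R A B}

theorem tmul_sub_tmul_mem_tensorBalancingIdeal (a : A) :
    algebraMap A B a ⊗ₜ[R] (1 : B) - 1 ⊗ₜ[R] algebraMap A B a ∈ tensorBalancingIdeal R A B :=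
  Ideal.subset_span ⟨a, rfl⟩

theorem ker_eq_tensorBalancingIdeal (φ : B ⊗[R] B →+* B ⊗[A] B)
    (hφ : ∀ x y : B, φ (x ⊗ₜ[R] y) = x ⊗ₜ[A] y) :
    RingHom.ker φ = tensorBalancingIdeal R A B := by
  apply le_antisymm
  · set I := tensorBalancingIdeal R A B
    let : Algebra A (B ⊗[R] B ⧸ I) :=
      ((Ideal.Quotient.mk I).comp
        (Algebra.TensorProduct.includeLeftRingHom.comp (algebraMap A B))).toAlgebra
    let left : B →ₐ[A] B ⊗[R] B ⧸ I :=
      { (Ideal.Quotient.mk I).comp Algebra.TensorProduct.includeLeftRingHom with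
        commutes' := fun _ => rfl }
    -- the right inclusion is `A`-linear only modulo the generators of `I`
    let right : B →ₐ[A] B ⊗[R] B ⧸ I :=
      { (Ideal.Quotient.mk I).comp Algebra.TensorProduct.includeRight.toRingHom with
        commutes' := fun a => (Ideal.Quotient.mk_eq_mk_iff_sub_mem _ _).mpr <| by
          simpa using I.neg_mem (tmul_sub_tmul_mem_tensorBalancingIdeal a) }
    have hlift : ∀ w, Algebra.TensorProduct.productMap left right (φ w) = Ideal.Quotient.mk I w := by
      intro w
      induction w using TensorProduct.induction_on with
      | zero => simp
      | tmul x y => simp [hφ, left, right, ← map_mul]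
      | add x y hx hy => simp only [map_add, hx, hy]
    intro w hw
    rw [← Ideal.Quotient.eq_zero_iff_mem, ← hlift, (RingHom.mem_ker).mp hw, map_zero]
  · refine Ideal.span_le.mpr ?_
    rintro _ ⟨a, rfl⟩
    simp [RingHom.mem_ker, hφ, Algebra.algebraMap_eq_smul_one, TensorProduct.smul_tmul]

end BalancingIdeal

theorem tensorBalancingIdeal_le_radical_of_isRadicial {R' A A' B' : Type*} [CommRing R']
    [CommRing A] [CommRing A'] [CommRing B'] [Algebra A A'] [Algebra A' B'] [Algebra R' B']
    (hrad : IsRadicial A A') (J : Ideal (B' ⊗[R'] B'))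
    (hJ : ∀ a : A, algebraMap A' B' (algebraMap A A' a) ⊗ₜ[R'] (1 : B')
      - 1 ⊗ₜ[R'] algebraMap A' B' (algebraMap A A' a) ∈ J) :
    tensorBalancingIdeal R' A' B' ≤ J.radical := by
  refine Ideal.span_le.mpr ?_
  rintro _ ⟨a', rfl⟩
  let f : A' →+* B' ⊗[R'] B' ⧸ J :=
    (Ideal.Quotient.mk J).comp (Algebra.TensorProduct.includeLeftRingHom.comp (algebraMap A' B'))
  let g : A' →+* B' ⊗[R'] B' ⧸ J :=
    (Ideal.Quotient.mk J).comp
      (Algebra.TensorProduct.includeRight.toRingHom.comp (algebraMap A' B'))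
  have hfg : f.comp (algebraMap A A') = g.comp (algebraMap A A') :=
    RingHom.ext fun a => (Ideal.Quotient.mk_eq_mk_iff_sub_mem _ _).mpr (hJ a)
  obtain ⟨n, hn⟩ := hrad.isNilpotent_sub f g hfg a'
  simp only [f, g, RingHom.comp_apply] at hn
  rw [← map_sub, ← map_pow, Ideal.Quotient.eq_zero_iff_mem] at hn
  exact ⟨n, hn⟩

theorem maranesi_of_radicial_of_surjective_general
    (R A B R' A' B' : Type*)
    [CommRing R] [CommRing A] [CommRing B] [CommRing R'] [CommRing A'] [CommRing B']
    [Algebra A B] [Algebra R B]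
    [Algebra A' B'] [Algebra R' B']
    [Algebra A A'] [Algebra B B']
    [Algebra A B'] [IsScalarTower A A' B'] [IsScalarTower A B B']
    -- the canonical morphisms φ and φ'
    (φ : B ⊗[R] B →+* B ⊗[A] B)
    (hφ : ∀ x y : B, φ (x ⊗ₜ[R] y) = x ⊗ₜ[A] y)
    (φ' : B' ⊗[R'] B' →+* B' ⊗[A'] B')
    (hφ' : ∀ x y : B', φ' (x ⊗ₜ[R'] y) = x ⊗ₜ[A'] y)
    -- the induced map f̄ : B ⊗[R] B → B' ⊗[R'] B'
    (fbar : B ⊗[R] B →+* B' ⊗[R'] B')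
    (hfbar : ∀ x y : B, fbar (x ⊗ₜ[R] y) = (algebraMap B B' x) ⊗ₜ[R'] (algebraMap B B' y))
    -- f_A is radicial
    (hrad : IsRadicial A A') :
    (RingHom.ker φ').radical = ((RingHom.ker φ).map fbar).radical := by
  have hfbar_gen : ∀ a : A, fbar (algebraMap A B a ⊗ₜ[R] 1 - 1 ⊗ₜ[R] algebraMap A B a) =
      algebraMap A' B' (algebraMap A A' a) ⊗ₜ[R'] 1
        - 1 ⊗ₜ[R'] algebraMap A' B' (algebraMap A A' a) := fun a => by
    rw [map_sub, hfbar, hfbar, map_one, ← IsScalarTower.algebraMap_apply,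
      ← IsScalarTower.algebraMap_apply, IsScalarTower.algebraMap_apply A A' B']
  rw [ker_eq_tensorBalancingIdeal φ' hφ', ker_eq_tensorBalancingIdeal φ hφ]
  apply le_antisymm
  · refine Ideal.radical_le_radical_iff.mpr (tensorBalancingIdeal_le_radical_of_isRadicial hrad _
      fun a => ?_)
    exact hfbar_gen a ▸ Ideal.mem_map_of_mem fbar (tmul_sub_tmul_mem_tensorBalancingIdeal a)
  · refine Ideal.radical_mono (Ideal.map_le_iff_le_comap.mpr (Ideal.span_le.mpr ?_))
    rintro _ ⟨a, rfl⟩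
    exact Ideal.mem_comap.mpr <|
      (hfbar_gen a).symm ▸ tmul_sub_tmul_mem_tensorBalancingIdeal (algebraMap A A' a)

/-- Given a commutative diagram of commutative ring homomorphisms with rows
`R → A → B`, `R' → A' → B'` and vertical maps `f_R = algebraMap R R'`, `f_A = algebraMap A A'`,
`f = algebraMap B B'`, if `f_A` is radicial and `f` is surjective, then the diagram is a
Maranesi diagram: `√(ker φ') = √(ker φ · (B' ⊗[R'] B'))`, the extension being the ideal
generated by the image of `ker φ` under the induced map `f̄ : B ⊗[R] B → B' ⊗[R'] B'`. -/
theorem maranesi_of_radicial_of_surjective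
    (R A B R' A' B' : Type*)
    [CommRing R] [CommRing A] [CommRing B] [CommRing R'] [CommRing A'] [CommRing B']
    [Algebra R A] [Algebra A B] [Algebra R B] [IsScalarTower R A B]
    [Algebra R' A'] [Algebra A' B'] [Algebra R' B'] [IsScalarTower R' A' B']
    [Algebra R R'] [Algebra A A'] [Algebra B B']
    [Algebra R A'] [IsScalarTower R R' A'] [IsScalarTower R A A']
    [Algebra A B'] [IsScalarTower A A' B'] [IsScalarTower A B B']
    -- the canonical morphisms φ and φ'
    (φ : B ⊗[R] B →+* B ⊗[A] B)
    (hφ : ∀ x y : B, φ (x ⊗ₜ[R] y) = x ⊗ₜ[A] y)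
    (φ' : B' ⊗[R'] B' →+* B' ⊗[A'] B')
    (hφ' : ∀ x y : B', φ' (x ⊗ₜ[R'] y) = x ⊗ₜ[A'] y)
    -- the induced map f̄ : B ⊗[R] B → B' ⊗[R'] B'
    (fbar : B ⊗[R] B →+* B' ⊗[R'] B')
    (hfbar : ∀ x y : B, fbar (x ⊗ₜ[R] y) = (algebraMap B B' x) ⊗ₜ[R'] (algebraMap B B' y))
    -- f_A is radicial and f is surjective
    (hrad : IsRadicial A A')
    (hsurj : Function.Surjective (algebraMap B B')) :
    (RingHom.ker φ').radical = ((RingHom.ker φ).map fbar).radical :=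
  maranesi_of_radicial_of_surjective_general R A B R' A' B' φ hφ φ' hφ' fbar hfbar hrad
end

section
/- Consider a commutative diagram of commutative ring homomorphisms with rows R → A →g B and R' → A' →g' B (same ring B in both rows, with identity as the vertical map on B) and vertical homomorphisms f_R : R → R' and f_A : A → A'. If f_R and f_A are radicial, then Ã_{B,R} = Ã'_{B,R'}, i.e. the relative weak normalization of A in B over R equals the relative weak normalization of A' in B over R'. -/
open scoped TensorProduct

/-- Two ring homomorphisms out of `B` agreeing on the image of `A` induce a ring homomorphism
out of `B ⊗[A] B`. -/
lemma auxLift {A B D : Type*} [CommRing A] [CommRing B] [CommRing D]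
    [Algebra A B] (u v : B →+* D)
    (h : ∀ a : A, u (algebraMap A B a) = v (algebraMap A B a)) :
    ∃ χ : B ⊗[A] B →+* D, ∀ b c : B, χ (b ⊗ₜ[A] c) = u b * v c := by
  letI : Algebra A D := (u.comp (algebraMap A B)).toAlgebra
  let u' : B →ₐ[A] D := { u with commutes' := fun a => rfl }
  let v' : B →ₐ[A] D := { v with commutes' := fun a => (h a).symm }
  exact ⟨(Algebra.TensorProduct.lift u' v' fun _ _ => Commute.all _ _).toRingHom,
    fun b c => Algebra.TensorProduct.lift_tmul ..⟩

lemma isNilpotent_of_forall_prime {S : Type*} [CommRing S] {z : S}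
    (h : ∀ P : Ideal S, P.IsPrime → z ∈ P) : IsNilpotent z := by
  rw [← mem_nilradical, nilradical_eq_sInf, Ideal.mem_sInf]
  exact fun {P} hP => h P hP

universe uB

/-- The key transfer principle: if any two homomorphisms from `B` into a reduced ring that
agree on `A` also agree on `A'`, then nilpotency of `x ⊗ 1 - 1 ⊗ x` over `A'` implies
nilpotency over `A`. -/
lemma nilpotent_transfer {A A' : Type*} {B : Type uB} [CommRing A] [CommRing A'] [CommRing B]
    [Algebra A B] [Algebra A' B]
    (hagree : ∀ (D : Type uB) [CommRing D] [IsReduced D] (u v : B →+* D),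
      (∀ a : A, u (algebraMap A B a) = v (algebraMap A B a)) →
      ∀ a' : A', u (algebraMap A' B a') = v (algebraMap A' B a'))
    (x : B) (hx : IsNilpotent (x ⊗ₜ[A'] (1:B) - (1:B) ⊗ₜ[A'] x)) :
    IsNilpotent (x ⊗ₜ[A] (1:B) - (1:B) ⊗ₜ[A] x) := by
  apply isNilpotent_of_forall_prime
  intro P hP
  letI := hP
  let q := Ideal.Quotient.mk P
  let u : B →+* (B ⊗[A] B) ⧸ P :=
    q.comp (Algebra.TensorProduct.includeLeftRingHom (R := A) (A := B) (B := B))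
  let v : B →+* (B ⊗[A] B) ⧸ P :=
    q.comp ((Algebra.TensorProduct.includeRight (R := A) (A := B) (B := B)).toRingHom)
  have hu : ∀ b : B, u b = q (b ⊗ₜ[A] 1) := fun b => rfl
  have hv : ∀ b : B, v b = q (1 ⊗ₜ[A] b) := fun b => rfl
  have huvA : ∀ a : A, u (algebraMap A B a) = v (algebraMap A B a) := by
    intro a
    rw [hu, hv, Algebra.algebraMap_eq_smul_one, TensorProduct.smul_tmul]
  haveI : IsReduced ((B ⊗[A] B) ⧸ P) := inferInstance
  have huvA' := hagree ((B ⊗[A] B) ⧸ P) u v huvA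
  obtain ⟨χ, hχ⟩ := auxLift (A := A') u v huvA'
  have : χ (x ⊗ₜ[A'] (1:B) - (1:B) ⊗ₜ[A'] x) = q (x ⊗ₜ[A] 1 - 1 ⊗ₜ[A] x) := by
    rw [χ.map_sub, hχ, hχ, v.map_one, u.map_one, mul_one, one_mul, hu, hv, q.map_sub]
  obtain ⟨n, hn⟩ := hx
  have hnil : IsNilpotent (q (x ⊗ₜ[A] 1 - 1 ⊗ₜ[A] x)) :=
    ⟨n, by rw [← this, ← χ.map_pow, hn, χ.map_zero]⟩
  have h0 : q (x ⊗ₜ[A] 1 - 1 ⊗ₜ[A] x) = 0 := hnil.eq_zero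
  rwa [← RingHom.mem_ker, Ideal.mk_ker] at h0

/-- Given a commutative diagram of commutative ring homomorphisms with rows
`R → A →g B` and `R' → A' →g' B` (the same ring `B` in both rows, with the identity as the
vertical map on `B`) and vertical maps `f_R = algebraMap R R'`, `f_A = algebraMap A A'`, if
`f_R` and `f_A` are radicial then `Ã_{B,R} = Ã'_{B,R'}`. -/
theorem weakNormalization_eq_of_radicial_of_radicial
    (R A R' A' B : Type*)
    [CommRing R] [CommRing A] [CommRing R'] [CommRing A'] [CommRing B]
    -- first row R → A → B
    [Algebra R A] [Algebra A B] [Algebra R B] [IsScalarTower R A B]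
    -- second row R' → A' → B
    [Algebra R' A'] [Algebra A' B] [Algebra R' B] [IsScalarTower R' A' B]
    -- vertical maps
    [Algebra R R'] [Algebra A A']
    -- commutativity of the left square
    [Algebra R A'] [IsScalarTower R R' A'] [IsScalarTower R A A']
    -- commutativity of the right square (vertical map on B is the identity)
    [IsScalarTower A A' B]
    -- the canonical morphisms φ and φ'
    (φ : B ⊗[R] B →+* B ⊗[A] B)
    (hφ : ∀ x y : B, φ (x ⊗ₜ[R] y) = x ⊗ₜ[A] y)
    (φ' : B ⊗[R'] B →+* B ⊗[A'] B)
    (hφ' : ∀ x y : B, φ' (x ⊗ₜ[R'] y) = x ⊗ₜ[A'] y)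
    -- f_R and f_A are radicial
    (hradR : IsRadicial R R')
    (hradA : IsRadicial A A') :
    {x : B | x ⊗ₜ[R] (1 : B) - (1 : B) ⊗ₜ[R] x ∈ (RingHom.ker φ).radical} =
      {x : B | x ⊗ₜ[R'] (1 : B) - (1 : B) ⊗ₜ[R'] x ∈ (RingHom.ker φ').radical} := by
  ext x
  simp only [Set.mem_setOf_eq]
  -- reduce both sides to nilpotency statements
  have h1 : ∀ n : ℕ, φ ((x ⊗ₜ[R] (1:B) - (1:B) ⊗ₜ[R] x) ^ n)
      = (x ⊗ₜ[A] (1:B) - (1:B) ⊗ₜ[A] x) ^ n := fun n => by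
    rw [φ.map_pow, φ.map_sub, hφ, hφ]
  have h2 : ∀ n : ℕ, φ' ((x ⊗ₜ[R'] (1:B) - (1:B) ⊗ₜ[R'] x) ^ n)
      = (x ⊗ₜ[A'] (1:B) - (1:B) ⊗ₜ[A'] x) ^ n := fun n => by
    rw [φ'.map_pow, φ'.map_sub, hφ', hφ']
  have e1 : (x ⊗ₜ[R] (1:B) - (1:B) ⊗ₜ[R] x ∈ (RingHom.ker φ).radical)
      ↔ IsNilpotent (x ⊗ₜ[A] (1:B) - (1:B) ⊗ₜ[A] x) := by
    rw [Ideal.mem_radical_iff]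
    exact ⟨fun ⟨n, hn⟩ => ⟨n, by rw [← h1]; exact hn⟩,
      fun ⟨n, hn⟩ => ⟨n, show _ ∈ RingHom.ker φ by rw [RingHom.mem_ker, h1, hn]⟩⟩
  have e2 : (x ⊗ₜ[R'] (1:B) - (1:B) ⊗ₜ[R'] x ∈ (RingHom.ker φ').radical)
      ↔ IsNilpotent (x ⊗ₜ[A'] (1:B) - (1:B) ⊗ₜ[A'] x) := by
    rw [Ideal.mem_radical_iff]
    exact ⟨fun ⟨n, hn⟩ => ⟨n, by rw [← h2]; exact hn⟩,
      fun ⟨n, hn⟩ => ⟨n, show _ ∈ RingHom.ker φ' by rw [RingHom.mem_ker, h2, hn]⟩⟩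
  rw [e1, e2]
  constructor
  · -- over A nilpotent → over A' nilpotent: agreement on A' implies agreement on A by the tower
    intro hx
    refine nilpotent_transfer (A := A') (A' := A) ?_ x hx
    intro D _ _ u v h a
    rw [IsScalarTower.algebraMap_apply A A' B a]
    exact h _
  · -- over A' nilpotent → over A nilpotent: here we use that `A → A'` is radicial
    intro hx
    refine nilpotent_transfer (A := A) (A' := A') ?_ x hx
    intro D _ _ u v h a'
    obtain ⟨w, hw⟩ := auxLift (A := A) (B := A') (u.comp (algebraMap A' B))
      (v.comp (algebraMap A' B)) (fun a => by
        simp only [RingHom.comp_apply, ← IsScalarTower.algebraMap_apply A A' B]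
        exact h a)
    have ht : IsNilpotent ((a' : A') ⊗ₜ[A] (1:A') - (1:A') ⊗ₜ[A] a') := by
      apply hradA
      rw [RingHom.mem_ker, RingHom.map_sub]
      simp [Algebra.TensorProduct.lmul'_apply_tmul]
    obtain ⟨n, hn⟩ := ht
    have hwt : w (a' ⊗ₜ[A] (1:A') - (1:A') ⊗ₜ[A] a')
        = u (algebraMap A' B a') - v (algebraMap A' B a') := by
      rw [w.map_sub, hw, hw]
      simp
    have hnil : IsNilpotent (u (algebraMap A' B a') - v (algebraMap A' B a')) :=
      ⟨n, by rw [← hwt, ← w.map_pow, hn, w.map_zero]⟩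
    exact sub_eq_zero.mp hnil.eq_zero
end

section
/- Let R →τ A →g B be a sequence of commutative ring homomorphisms. Then the relative weak normalization is idempotent: taking the sequence R → Ã_{B,R} → B, where A → Ã_{B,R} is given by g and Ã_{B,R} → B is the inclusion, one has (Ã_{B,R})~_{B,R} = Ã_{B,R}. -/
set_option maxHeartbeats 1000000


open scoped TensorProduct

/-- For a sequence of commutative ring homomorphisms `R →τ A →g B`, the relative
weak normalization is idempotent: if `C` is the subring of `B` whose carrier is
`Ã_{B,R} = Δ⁻¹(√(ker φ))` (it is a subring of `B` containing `g(A)`), then the relative weak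
normalization of `C` in `B` over `R`, computed for the sequence `R → C ↪ B` via the canonical
map `φ₁ : B ⊗[R] B → B ⊗[C] B`, is again `Ã_{B,R}`. -/
theorem weakNormalization_idempotent
    (R A B : Type*)
    [CommRing R] [CommRing A] [CommRing B]
    [Algebra R A] [Algebra A B] [Algebra R B] [IsScalarTower R A B]
    -- the canonical morphism φ
    (φ : B ⊗[R] B →+* B ⊗[A] B)
    (hφ : ∀ x y : B, φ (x ⊗ₜ[R] y) = x ⊗ₜ[A] y)
    -- C is the weak normalization of A in B over R, as a subring of B
    (C : Subring B)
    (hC : (C : Set B) =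
      {x : B | x ⊗ₜ[R] (1 : B) - (1 : B) ⊗ₜ[R] x ∈ (RingHom.ker φ).radical})
    -- the canonical morphism φ₁ : B ⊗[R] B → B ⊗[C] B
    (φ₁ : B ⊗[R] B →+* B ⊗[C] B)
    (hφ₁ : ∀ x y : B, φ₁ (x ⊗ₜ[R] y) = x ⊗ₜ[C] y) :
    {x : B | x ⊗ₜ[R] (1 : B) - (1 : B) ⊗ₜ[R] x ∈ (RingHom.ker φ₁).radical} =
      (C : Set B) := by
  classical
  set J := (RingHom.ker φ).radical with hJ
  have hCmem : ∀ x : B, x ∈ C ↔ x ⊗ₜ[R] (1:B) - (1:B) ⊗ₜ[R] x ∈ J := by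
    intro x
    rw [← SetLike.mem_coe, hC]
    rfl
  -- for c ∈ C, c ⊗ 1 = 1 ⊗ c in B ⊗[C] B
  have htC : ∀ c : C, (c : B) ⊗ₜ[C] (1:B) = (1:B) ⊗ₜ[C] (c : B) := by
    intro c
    have h1 : (c : B) ⊗ₜ[C] (1:B) = (c • (1:B)) ⊗ₜ[C] (1:B) := by
      rw [Algebra.smul_def, mul_one]
      rfl
    rw [h1, TensorProduct.smul_tmul, Algebra.smul_def, mul_one]
    rfl
  -- image of A lies in C
  have hgC : ∀ a : A, algebraMap A B a ∈ C := by
    intro a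
    rw [hCmem]
    refine Ideal.le_radical ?_
    rw [RingHom.mem_ker, map_sub, hφ, hφ, sub_eq_zero]
    have h1 : algebraMap A B a = a • (1:B) := Algebra.algebraMap_eq_smul_one a
    rw [h1]
    exact TensorProduct.smul_tmul a 1 1
  -- construct ψ : B ⊗[A] B →+* B ⊗[C] B with ψ ∘ φ = φ₁
  letI : Algebra A (B ⊗[C] B) :=
    ((Algebra.TensorProduct.includeLeftRingHom : B →+* B ⊗[C] B).comp (algebraMap A B)).toAlgebra
  let f : B →ₐ[A] B ⊗[C] B :=
    { (Algebra.TensorProduct.includeLeftRingHom : B →+* B ⊗[C] B) with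
      commutes' := fun a => rfl }
  let g : B →ₐ[A] B ⊗[C] B :=
    { (Algebra.TensorProduct.includeRight : B →ₐ[C] B ⊗[C] B).toRingHom with
      commutes' := fun a => by
        show (1:B) ⊗ₜ[C] (algebraMap A B a) = (algebraMap A B a) ⊗ₜ[C] 1
        exact (htC ⟨algebraMap A B a, hgC a⟩).symm }
  let ψ := Algebra.TensorProduct.productMap f g
  have hψ : ∀ u : B ⊗[R] B, ψ (φ u) = φ₁ u := by
    intro u
    induction u using TensorProduct.induction_on with
    | zero => simp
    | tmul x y =>
        rw [hφ, hφ₁]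
        show ψ (x ⊗ₜ[A] y) = x ⊗ₜ[C] y
        rw [Algebra.TensorProduct.productMap_apply_tmul]
        show (x ⊗ₜ[C] (1:B)) * ((1:B) ⊗ₜ[C] y) = x ⊗ₜ[C] y
        rw [Algebra.TensorProduct.tmul_mul_tmul, mul_one, one_mul]
    | add u v hu hv => rw [map_add, map_add, map_add, hu, hv]
  have hker : RingHom.ker φ ≤ RingHom.ker φ₁ := by
    intro u hu
    rw [RingHom.mem_ker] at hu ⊢
    rw [← hψ, hu, map_zero]
  -- construct θ : B ⊗[C] B →+* (B ⊗[R] B) ⧸ J with θ ∘ φ₁ = mk J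
  letI : Algebra C ((B ⊗[R] B) ⧸ J) :=
    (((Ideal.Quotient.mk J).comp
        (Algebra.TensorProduct.includeLeftRingHom : B →+* B ⊗[R] B)).comp C.subtype).toAlgebra
  let f₁ : B →ₐ[C] (B ⊗[R] B) ⧸ J :=
    { (Ideal.Quotient.mk J).comp
        (Algebra.TensorProduct.includeLeftRingHom : B →+* B ⊗[R] B) with
      commutes' := fun c => rfl }
  let g₁ : B →ₐ[C] (B ⊗[R] B) ⧸ J :=
    { (Ideal.Quotient.mk J).comp
        ((Algebra.TensorProduct.includeRight : B →ₐ[R] B ⊗[R] B) : B →+* B ⊗[R] B) with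
      commutes' := fun c => by
        show Ideal.Quotient.mk J ((1:B) ⊗ₜ[R] (c:B)) = Ideal.Quotient.mk J ((c:B) ⊗ₜ[R] (1:B))
        rw [Ideal.Quotient.eq]
        have h := (hCmem (c : B)).mp c.2
        have : (1:B) ⊗ₜ[R] (c:B) - (c:B) ⊗ₜ[R] (1:B)
            = -((c:B) ⊗ₜ[R] (1:B) - (1:B) ⊗ₜ[R] (c:B)) := by ring
        rw [this]
        exact J.neg_mem h }
  let θ := Algebra.TensorProduct.productMap f₁ g₁
  have hθ : ∀ u : B ⊗[R] B, θ (φ₁ u) = Ideal.Quotient.mk J u := by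
    intro u
    induction u using TensorProduct.induction_on with
    | zero => simp
    | tmul x y =>
        rw [hφ₁]
        show θ (x ⊗ₜ[C] y) = Ideal.Quotient.mk J (x ⊗ₜ[R] y)
        rw [Algebra.TensorProduct.productMap_apply_tmul]
        show Ideal.Quotient.mk J (x ⊗ₜ[R] (1:B)) * Ideal.Quotient.mk J ((1:B) ⊗ₜ[R] y) = _
        rw [← map_mul, Algebra.TensorProduct.tmul_mul_tmul, mul_one, one_mul]
    | add u v hu hv => rw [map_add, map_add, map_add, hu, hv]
  have hker1 : RingHom.ker φ₁ ≤ J := by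
    intro u hu
    have h0 : Ideal.Quotient.mk J u = 0 := by
      rw [← hθ u, RingHom.mem_ker.mp hu, map_zero]
    exact (Ideal.Quotient.eq_zero_iff_mem).mp h0
  have hrad : (RingHom.ker φ₁).radical = J := by
    apply le_antisymm
    · have h := Ideal.radical_mono hker1
      rwa [hJ, Ideal.radical_idem] at h
    · exact Ideal.radical_mono hker
  ext x
  simp only [Set.mem_setOf_eq, SetLike.mem_coe, hrad]
  exact (hCmem x).symm
end

section
/- Let R → A →g B be a sequence of commutative ring homomorphisms with g integral. Then Ã_{B,R} is a radicial A-algebra; that is, the kernel of the canonical multiplication map γ : Ã_{B,R} ⊗_A Ã_{B,R} → Ã_{B,R} is a nil ideal of Ã_{B,R} ⊗_A Ã_{B,R}. -/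
open scoped TensorProduct

/-! A ring element is nilpotent iff it vanishes at every geometric point, so it suffices that
any two `A`-algebra maps `f g : Ã → K` into an algebraically closed field agree. As `B` is integral
over `Ã`, they extend to `A`-algebra maps `F G : B → K`. For `c ∈ Ã` the element `c ⊗ 1 - 1 ⊗ c`
of `B ⊗[A] B` is the image under `φ` of an element of `√(ker φ)`, hence nilpotent, so
`F ⊗ G` sends it to `0` in the field `K`, i.e. `F c = G c`. -/

section Extension

variable {C B K : Type*} [CommRing C] [CommRing B] [Field K] [IsAlgClosed K]
  [Algebra C B] [Algebra.IsIntegral C B] [FaithfulSMul C B]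

theorem exists_ringHom_comp_algebraMap_eq_of_isIntegral (u : C →+* K) :
    ∃ U : B →+* K, U.comp (algebraMap C B) = u := by
  have := RingHom.ker_isPrime u
  obtain ⟨⟨Q, _, _⟩⟩ := (RingHom.ker u).nonempty_primesOver (S := B)
  let : Algebra (C ⧸ RingHom.ker u) K := u.kerLift.toAlgebra
  have : Module.IsTorsionFree (C ⧸ RingHom.ker u) K :=
    Module.isTorsionFree_iff_algebraMap_injective.mpr u.kerLift_injective
  have : Module.IsTorsionFree (C ⧸ RingHom.ker u) (B ⧸ Q) :=
    Module.isTorsionFree_iff_algebraMap_injective.mpr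
      (FaithfulSMul.algebraMap_injective _ _)
  let U₀ : B ⧸ Q →ₐ[C ⧸ RingHom.ker u] K := IsAlgClosed.lift
  refine ⟨U₀.toRingHom.comp (Ideal.Quotient.mk Q), RingHom.ext fun c => ?_⟩
  change U₀ (algebraMap (C ⧸ RingHom.ker u) (B ⧸ Q) (Ideal.Quotient.mk _ c)) = u c
  rw [U₀.commutes]
  rfl

theorem AlgHom.exists_comp_eq_of_isIntegral {A : Type*} [CommRing A] [Algebra A C] [Algebra A B]
    [IsScalarTower A C B] [Algebra A K] (f : C →ₐ[A] K) :
    ∃ F : B →ₐ[A] K, F.comp (IsScalarTower.toAlgHom A C B) = f := by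
  obtain ⟨U, hU⟩ := exists_ringHom_comp_algebraMap_eq_of_isIntegral (B := B) f.toRingHom
  refine ⟨{ U with commutes' := fun a => ?_ }, AlgHom.ext fun c => congr($hU c)⟩
  simpa [IsScalarTower.algebraMap_apply A C B] using congr($hU (algebraMap A C a))

end Extension

theorem AlgHom.apply_eq_of_isNilpotent_tmul_sub_tmul {A B K : Type*} [CommRing A] [CommRing B]
    [CommRing K] [IsReduced K] [Algebra A B] [Algebra A K] (f g : B →ₐ[A] K) {b : B}
    (hb : IsNilpotent (b ⊗ₜ[A] (1 : B) - 1 ⊗ₜ[A] b)) : f b = g b := by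
  have := hb.map (Algebra.TensorProduct.productMap f g)
  simp only [map_sub, Algebra.TensorProduct.productMap_left_apply,
    Algebra.TensorProduct.productMap_right_apply] at this
  exact sub_eq_zero.mp this.eq_zero

universe u

open Algebra.TensorProduct in
theorem isNilpotent_of_mem_ker_lmul' {A : Type*} {C : Type u} [CommRing A] [CommRing C]
    [Algebra A C]
    (h : ∀ (K : Type u) [Field K] [IsAlgClosed K] [Algebra A K] (f g : C →ₐ[A] K), f = g)
    {z : C ⊗[A] C} (hz : z ∈ RingHom.ker (lmul' A : C ⊗[A] C →ₐ[A] C)) :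
    IsNilpotent z := by
  refine nilpotent_iff_mem_prime.mpr fun q _ => ?_
  let π := IsScalarTower.toAlgHom A (C ⊗[A] C) (AlgebraicClosure q.ResidueField)
  have hπ : π = (π.comp includeLeft).comp (lmul' A) := by
    ext c
    · simp
    · simpa using congr($(h _ (π.comp includeLeft) (π.comp includeRight)) c).symm
  have hπz : π z = 0 := by
    rw [hπ]
    simp [RingHom.mem_ker.mp hz]
  rw [← Ideal.ker_algebraMap_residueField q, RingHom.mem_ker]
  apply (algebraMap q.ResidueField (AlgebraicClosure q.ResidueField)).injective
  simpa [π, ← IsScalarTower.algebraMap_apply] using hπz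

theorem weakNormalization_isRadicial_of_isIntegral_general
    (R A B : Type*)
    [CommRing R] [CommRing A] [CommRing B]
    [Algebra A B] [Algebra R B]
    -- g is integral
    (hint : (algebraMap A B).IsIntegral)
    -- the canonical morphism φ
    (φ : B ⊗[R] B →+* B ⊗[A] B)
    (hφ : ∀ x y : B, φ (x ⊗ₜ[R] y) = x ⊗ₜ[A] y)
    -- C is the weak normalization of A in B over R, as a subring of B
    (C : Subring B)
    (hC : (C : Set B) =
      {x : B | x ⊗ₜ[R] (1 : B) - (1 : B) ⊗ₜ[R] x ∈ (RingHom.ker φ).radical})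
    -- C is an A-algebra via g
    [Algebra A C]
    (hAC : ∀ a : A, (algebraMap A C a : B) = algebraMap A B a)
    -- the multiplication map γ : C ⊗[A] C → C
    (γ : C ⊗[A] C →+* C)
    (hγ : ∀ x y : C, γ (x ⊗ₜ[A] y) = x * y) :
    ∀ z ∈ RingHom.ker γ, IsNilpotent z := by
  have : IsScalarTower A C B :=
    .of_algebraMap_eq' (RingHom.ext fun a => (hAC a).symm)
  have : Algebra.IsIntegral A B := ⟨hint⟩
  have : Algebra.IsIntegral C B := .tower_top A
  have hγ_eq : γ = (Algebra.TensorProduct.lmul' A : C ⊗[A] C →ₐ[A] C).toRingHom :=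
    Algebra.TensorProduct.ringHom_ext (RingHom.ext fun c => by simp [hγ])
      (RingHom.ext fun c => by simp [hγ])
  have hC_nil (c : C) : IsNilpotent ((c : B) ⊗ₜ[A] (1 : B) - 1 ⊗ₜ[A] (c : B)) := by
    have hc : (c : B) ∈ (C : Set B) := c.2
    rw [hC] at hc
    obtain ⟨n, hn⟩ := hc
    exact ⟨n, by simpa [hφ] using hn⟩
  intro z hz
  rw [hγ_eq] at hz
  refine isNilpotent_of_mem_ker_lmul' (fun K _ _ _ f g => ?_) hz
  obtain ⟨F, rfl⟩ := f.exists_comp_eq_of_isIntegral (B := B)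
  obtain ⟨G, rfl⟩ := g.exists_comp_eq_of_isIntegral (B := B)
  exact AlgHom.ext fun c => F.apply_eq_of_isNilpotent_tmul_sub_tmul G (hC_nil c)

/-- Let `R → A →g B` be a sequence of commutative ring homomorphisms with `g`
integral. Then the relative weak normalization `Ã_{B,R} = Δ⁻¹(√(ker φ))`, realized as the
subring `C` of `B` (an `A`-algebra via `g`), is a radicial `A`-algebra: the kernel of the
canonical multiplication map `γ : C ⊗[A] C → C` is a nil ideal of `C ⊗[A] C`. -/
theorem weakNormalization_isRadicial_of_isIntegral
    (R A B : Type*)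
    [CommRing R] [CommRing A] [CommRing B]
    [Algebra R A] [Algebra A B] [Algebra R B] [IsScalarTower R A B]
    -- g is integral
    (hint : (algebraMap A B).IsIntegral)
    -- the canonical morphism φ
    (φ : B ⊗[R] B →+* B ⊗[A] B)
    (hφ : ∀ x y : B, φ (x ⊗ₜ[R] y) = x ⊗ₜ[A] y)
    -- C is the weak normalization of A in B over R, as a subring of B
    (C : Subring B)
    (hC : (C : Set B) =
      {x : B | x ⊗ₜ[R] (1 : B) - (1 : B) ⊗ₜ[R] x ∈ (RingHom.ker φ).radical})
    -- C is an A-algebra via g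
    [Algebra A C]
    (hAC : ∀ a : A, (algebraMap A C a : B) = algebraMap A B a)
    -- the multiplication map γ : C ⊗[A] C → C
    (γ : C ⊗[A] C →+* C)
    (hγ : ∀ x y : C, γ (x ⊗ₜ[A] y) = x * y) :
    ∀ z ∈ RingHom.ker γ, IsNilpotent z :=
  weakNormalization_isRadicial_of_isIntegral_general R A B hint φ hφ C hC hAC γ hγ
end

section
/- Let R be a commutative ring and let J_1, …, J_n, I be ideals of R such that the product J_1 ⋯ J_n is a nil ideal of R. If x ∈ R is such that for every i ∈ {1, …, n} the class x + J_i belongs to the radical of the ideal I·(R/J_i) generated by the image of I in R/J_i, then x ∈ √I. -/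
/-! A prime `P ⊇ I` contains the nil ideal `J 1 ⋯ J n`, hence some `J i`, hence `I + J i`, and the
hypothesis on `x` places `x` in the radical of `I + J i`. So `x` lies in every prime over `I`. -/

namespace Ideal

variable {R : Type*} [CommRing R]

theorem mk_mem_radical_map_quotient_iff {I J : Ideal R} {x : R} :
    Quotient.mk J x ∈ (I.map (Quotient.mk J)).radical ↔ x ∈ (I ⊔ J).radical := by
  rw [← mem_comap, comap_radical, comap_map_of_surjective' _ Quotient.mk_surjective, mk_ker]

theorem mem_radical_of_prod_le_radical {ι : Type*} {s : Finset ι} {J : ι → Ideal R}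
    {I : Ideal R} (hprod : ∏ i ∈ s, J i ≤ I.radical) {x : R}
    (hx : ∀ i ∈ s, x ∈ (I ⊔ J i).radical) : x ∈ I.radical := by
  rw [radical_eq_sInf, Submodule.mem_sInf]
  rintro P ⟨hIP, hP⟩
  obtain ⟨i, hi, hJP⟩ := hP.prod_le.1 (hprod.trans (hP.radical_le_iff.2 hIP))
  exact hP.radical_le_iff.2 (sup_le hIP hJP) (hx i hi)

end Ideal

theorem mem_radical_of_forall_quotient_mem_radical_general
    (R : Type*) [CommRing R] (n : ℕ)
    (J : Fin n → Ideal R) (I : Ideal R)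
    (hnil : ∀ x ∈ ∏ i, J i, IsNilpotent x)
    (x : R)
    (hx : ∀ i : Fin n,
      Ideal.Quotient.mk (J i) x ∈ (I.map (Ideal.Quotient.mk (J i))).radical) :
    x ∈ I.radical := by
  have hprod : ∏ i, J i ≤ I.radical := fun y hy ↦
    Ideal.radical_mono bot_le (mem_nilradical.2 (hnil y hy))
  exact Ideal.mem_radical_of_prod_le_radical hprod fun i _ ↦
    Ideal.mk_mem_radical_map_quotient_iff.1 (hx i)

/-- Let `R` be a commutative ring and `J 1, …, J n, I` ideals of `R` such that
the product `J 1 ⋯ J n` is a nil ideal of `R`. If `x ∈ R` is such that for every `i` the class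
of `x` in `R / J i` belongs to the radical of the extension of `I` to `R / J i`, then
`x ∈ √I`. -/
theorem mem_radical_of_forall_quotient_mem_radical
    (R : Type*) [CommRing R] (n : ℕ) (hn : 0 < n)
    (J : Fin n → Ideal R) (I : Ideal R)
    (hnil : ∀ x ∈ ∏ i, J i, IsNilpotent x)
    (x : R)
    (hx : ∀ i : Fin n,
      Ideal.Quotient.mk (J i) x ∈ (I.map (Ideal.Quotient.mk (J i))).radical) :
    x ∈ I.radical :=
  mem_radical_of_forall_quotient_mem_radical_general R n J I hnil x hx
end
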